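/- Let G be a connected graph and n ≥ 2 an integer. Then the chromatic number of the n-subdivision G^{1/n} equals 3 if n is odd and χ(G) ≥ 3, and equals 2 otherwise (assuming G has at least one edge). -/

import Mathlib

open SimpleGraph

/-- The `m`-th power of a graph `G`: two distinct vertices are adjacent iff
their distance in `G` is at most `m` (and they are connected). -/
def SimpleGraph.power {V : Type*} (G : SimpleGraph V) (m : ℕ) : SimpleGraph V where
  Adj x y := x ≠ y ∧ G.Reachable x y ∧ G.dist x y ≤ m
  symm := ⟨fun x y => by
    rintro ⟨h1, h2, h3⟩
    exact ⟨h1.symm, h2.symm, by rwa [SimpleGraph.dist_comm]⟩⟩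
  loopless := ⟨fun x => by simp⟩

/-- The `n`-subdivision of a graph `G`: every edge is replaced by a path of
length `n`.  Terminal vertices are `Sum.inl` vertices; each edge `e` carries
`n - 1` internal vertices `Sum.inr (e, i)`, `i : Fin (n-1)`, ordered along a
fixed orientation of `e`. -/
def SimpleGraph.subdivision {V : Type*} (G : SimpleGraph V) (n : ℕ) :
    SimpleGraph (V ⊕ (G.edgeSet × Fin (n - 1))) where
  Adj x y :=
    match x, y with
    | Sum.inl u, Sum.inl v => n = 1 ∧ G.Adj u v
    | Sum.inl u, Sum.inr (e, i) =>
        (u = (Quot.out e.1).1 ∧ (i : ℕ) = 0) ∨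
        (u = (Quot.out e.1).2 ∧ (i : ℕ) = n - 2)
    | Sum.inr (e, i), Sum.inl v =>
        (v = (Quot.out e.1).1 ∧ (i : ℕ) = 0) ∨
        (v = (Quot.out e.1).2 ∧ (i : ℕ) = n - 2)
    | Sum.inr (e, i), Sum.inr (f, j) =>
        e = f ∧ ((i : ℕ) + 1 = (j : ℕ) ∨ (j : ℕ) + 1 = (i : ℕ))
  symm := ⟨fun x y => by
    rcases x with u | ⟨e, i⟩ <;> rcases y with v | ⟨f, j⟩ <;>
      simp only [] <;> intro h
    · exact ⟨h.1, h.2.symm⟩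
    · exact h
    · exact h
    · obtain ⟨rfl, h2⟩ := h; exact ⟨rfl, h2.symm⟩⟩
  loopless := ⟨fun x => by
    rcases x with u | ⟨e, i⟩ <;> simp only []
    · rintro ⟨-, h⟩; exact G.loopless.irrefl u h
    · rintro ⟨-, h | h⟩ <;> omega⟩

/-! Colors in `ZMod 2` must alternate along each subdivided edge, so a 2-coloring of
`G.subdivision n` is determined by its restriction `c` to the original vertices, and the ends of
every edge `uv` satisfy `c v = c u + n`. Hence the subdivision is bipartite iff `n` is even or `G`
is bipartite. Giving all original vertices a third color and alternating two colors along each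
path always yields a 3-coloring, and for `n ≥ 2` the subdivision has an edge as soon as `G`
does. -/

namespace ZMod

lemma eq_add_one_of_ne : ∀ {a b : ZMod 2}, a ≠ b → a = b + 1 := by decide

lemma add_one_add_one : ∀ a : ZMod 2, a + 1 + 1 = a := by decide

lemma natCast_sub_two {n : ℕ} (hn : 2 ≤ n) : ((n - 2 : ℕ) : ZMod 2) = n := by
  rw [Nat.cast_sub hn, show ((2 : ℕ) : ZMod 2) = 0 from rfl, sub_zero]

end ZMod

namespace SimpleGraph

variable {V : Type*} {G : SimpleGraph V} {n : ℕ}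

lemma adj_out_fst_out_snd (e : G.edgeSet) : G.Adj (Quot.out e.1).1 (Quot.out e.1).2 := by
  rw [← mem_edgeSet]
  convert e.2
  exact Quot.out_eq e.1

lemma ne_of_adj_of_forall_edgeSet {α : Type*} {f : V → α}
    (hf : ∀ e : G.edgeSet, f (Quot.out e.1).1 ≠ f (Quot.out e.1).2) {a b : V}
    (hab : G.Adj a b) :
    f a ≠ f b := by
  have hout : s((Quot.out s(a, b)).1, (Quot.out s(a, b)).2) = s(a, b) := Quot.out_eq _
  rcases Sym2.eq_iff.mp hout with ⟨ha, hb⟩ | ⟨hb, ha⟩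
  · simpa [ha, hb] using hf ⟨s(a, b), hab⟩
  · simpa [ha, hb] using (hf ⟨s(a, b), hab⟩).symm

lemma three_le_chromaticNumber_iff : 3 ≤ G.chromaticNumber ↔ ¬ G.Colorable 2 := by
  rw [← chromaticNumber_le_iff_colorable, not_le, ← ENat.add_one_le_iff (by simp)]
  rfl

lemma colorable_two_iff_nonempty_coloring_zmod :
    G.Colorable 2 ↔ Nonempty (G.Coloring (ZMod 2)) :=
  ⟨fun h => ⟨h.toColoring (by simp)⟩, fun ⟨C⟩ => by simpa using C.colorable⟩

namespace subdivision

lemma adj_inl_inl {u v : V} :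
    (G.subdivision n).Adj (.inl u) (.inl v) ↔ n = 1 ∧ G.Adj u v := Iff.rfl

lemma adj_inl_inr {u : V} {e : G.edgeSet} {i : Fin (n - 1)} :
    (G.subdivision n).Adj (.inl u) (.inr (e, i)) ↔
      (u = (Quot.out e.1).1 ∧ (i : ℕ) = 0) ∨ (u = (Quot.out e.1).2 ∧ (i : ℕ) = n - 2) :=
  Iff.rfl

lemma adj_inr_inr {e f : G.edgeSet} {i j : Fin (n - 1)} :
    (G.subdivision n).Adj (.inr (e, i)) (.inr (f, j)) ↔
      e = f ∧ ((i : ℕ) + 1 = j ∨ (j : ℕ) + 1 = i) :=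
  Iff.rfl

variable (G n) in
noncomputable def alternatingColor (c : V → ZMod 2) : V ⊕ (G.edgeSet × Fin (n - 1)) → ZMod 2
  | .inl v => c v
  | .inr (e, i) => c (Quot.out e.1).1 + i + 1

variable {c : V → ZMod 2}

lemma alternatingColor_inl_ne_inr (hn : 2 ≤ n)
    (hc : ∀ e : G.edgeSet, c (Quot.out e.1).2 ≠ c (Quot.out e.1).1 + n + 1)
    {u : V} {e : G.edgeSet} {i : Fin (n - 1)} (hui : (G.subdivision n).Adj (.inl u) (.inr (e, i))) :
    alternatingColor G n c (.inl u) ≠ alternatingColor G n c (.inr (e, i)) := by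
  rcases adj_inl_inr.mp hui with ⟨rfl, hi⟩ | ⟨rfl, hi⟩
  · simp [alternatingColor, hi]
  · simpa [alternatingColor, hi, ZMod.natCast_sub_two hn] using hc e

lemma alternatingColor_ne_of_adj (hn : 2 ≤ n)
    (hc : ∀ e : G.edgeSet, c (Quot.out e.1).2 ≠ c (Quot.out e.1).1 + n + 1)
    {x y : V ⊕ (G.edgeSet × Fin (n - 1))} (hxy : (G.subdivision n).Adj x y) :
    alternatingColor G n c x ≠ alternatingColor G n c y := by
  rcases x with u | ⟨e, i⟩ <;> rcases y with v | ⟨f, j⟩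
  · exact absurd (adj_inl_inl.mp hxy).1 (by omega)
  · exact alternatingColor_inl_ne_inr hn hc hxy
  · exact (alternatingColor_inl_ne_inr hn hc hxy.symm).symm
  · obtain ⟨rfl, hij | hij⟩ := adj_inr_inr.mp hxy <;>
      simp [alternatingColor, ← hij, ← add_assoc]

lemma coe_coloring_eq_alternatingColor (C : (G.subdivision n).Coloring (ZMod 2)) :
    ⇑C = alternatingColor G n (C ∘ .inl) := by
  funext x
  rcases x with v | ⟨e, i, hi⟩
  · rfl
  induction i with
  | zero =>
    have hfirst : (G.subdivision n).Adj (.inl (Quot.out e.1).1) (.inr (e, ⟨0, hi⟩)) :=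
      Or.inl ⟨rfl, rfl⟩
    simpa [alternatingColor] using ZMod.eq_add_one_of_ne (C.valid hfirst).symm
  | succ i ih =>
    have hstep : (G.subdivision n).Adj (.inr (e, ⟨i, by omega⟩)) (.inr (e, ⟨i + 1, hi⟩)) :=
      ⟨rfl, Or.inl rfl⟩
    rw [ZMod.eq_add_one_of_ne (C.valid hstep).symm, ih (by omega)]
    simp [alternatingColor, add_assoc]

lemma colorable_two_of_forall_edgeSet (hn : 2 ≤ n) (c : V → ZMod 2)
    (hc : ∀ e : G.edgeSet, c (Quot.out e.1).2 ≠ c (Quot.out e.1).1 + n + 1) :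
    (G.subdivision n).Colorable 2 :=
  colorable_two_iff_nonempty_coloring_zmod.mpr
    ⟨Coloring.mk (alternatingColor G n c) (alternatingColor_ne_of_adj hn hc)⟩

lemma colorable_two_of_odd (hn : 2 ≤ n) (hodd : Odd n)
    (h : (G.subdivision n).Colorable 2) : G.Colorable 2 := by
  obtain ⟨C⟩ := colorable_two_iff_nonempty_coloring_zmod.mp h
  refine colorable_two_iff_nonempty_coloring_zmod.mpr
    ⟨Coloring.mk (C ∘ .inl) fun hab => ne_of_adj_of_forall_edgeSet (fun e => ?_) hab⟩
  have hlast : (G.subdivision n).Adj (.inl (Quot.out e.1).2) (.inr (e, ⟨n - 2, by omega⟩)) :=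
    Or.inr ⟨rfl, rfl⟩
  have := C.valid hlast
  rw [coe_coloring_eq_alternatingColor C] at this
  simpa [alternatingColor, ZMod.natCast_sub_two hn, hodd.natCast_zmod_two, ZMod.add_one_add_one]
    using this.symm

theorem colorable_two_iff (hn : 2 ≤ n) :
    (G.subdivision n).Colorable 2 ↔ Even n ∨ G.Colorable 2 := by
  refine ⟨fun h => (Nat.even_or_odd n).imp_right fun hodd =>
    colorable_two_of_odd hn hodd h, fun h => ?_⟩
  by_cases heven : Even n
  · exact colorable_two_of_forall_edgeSet hn 0 fun e => by simp [heven.natCast_zmod_two]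
  · obtain ⟨C⟩ := colorable_two_iff_nonempty_coloring_zmod.mp (h.resolve_left heven)
    refine colorable_two_of_forall_edgeSet hn C fun e => ?_
    simpa [(Nat.not_even_iff_odd.mp heven).natCast_zmod_two, ZMod.add_one_add_one] using
      (C.valid (adj_out_fst_out_snd e)).symm

lemma colorable_three (hn : n ≠ 1) : (G.subdivision n).Colorable 3 := by
  let C : (G.subdivision n).Coloring (Option (ZMod 2)) :=
    Coloring.mk (Sum.elim (fun _ => none) fun p => some (p.2 : ℕ)) ?_
  · simpa using C.colorable
  rintro (u | ⟨e, i⟩) (v | ⟨f, j⟩) h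
  · exact absurd (adj_inl_inl.mp h).1 hn
  · simp
  · simp
  · obtain ⟨rfl, hij | hij⟩ := adj_inr_inr.mp h <;> simp [← hij]

lemma not_colorable_one (hn : 2 ≤ n) (he : G.edgeSet.Nonempty) :
    ¬ (G.subdivision n).Colorable 1 := by
  obtain ⟨e, he⟩ := he
  have hfirst :
      (G.subdivision n).Adj (.inl (Quot.out e).1) (.inr (⟨e, he⟩, ⟨0, by omega⟩)) :=
    Or.inl ⟨rfl, rfl⟩
  rintro ⟨C⟩
  exact C.valid hfirst (Subsingleton.elim _ _)

end subdivision

end SimpleGraph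

theorem chromatic_subdivision_general {V : Type*} (G : SimpleGraph V)
    (n : ℕ) (hn : 2 ≤ n) (he : G.edgeSet.Nonempty) :
    (Odd n ∧ 3 ≤ G.chromaticNumber → (G.subdivision n).chromaticNumber = 3) ∧
    (¬ (Odd n ∧ 3 ≤ G.chromaticNumber) → (G.subdivision n).chromaticNumber = 2) := by
  rw [three_le_chromaticNumber_iff, ← Nat.not_even_iff_odd]
  refine ⟨fun h => ?_, fun h => ?_⟩
  · rw [show (3 : ℕ∞) = (2 : ℕ) + 1 from rfl, chromaticNumber_eq_iff_colorable_not_colorable,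
      subdivision.colorable_two_iff hn]
    exact ⟨subdivision.colorable_three (by omega), by tauto⟩
  · rw [show (2 : ℕ∞) = (1 : ℕ) + 1 from rfl, chromaticNumber_eq_iff_colorable_not_colorable,
      subdivision.colorable_two_iff hn]
    exact ⟨by tauto, subdivision.not_colorable_one hn he⟩

theorem chromatic_subdivision {V : Type*} (G : SimpleGraph V)
    (hG : G.Connected) (n : ℕ) (hn : 2 ≤ n) (he : G.edgeSet.Nonempty) :
    (Odd n ∧ 3 ≤ G.chromaticNumber → (G.subdivision n).chromaticNumber = 3) ∧
    (¬ (Odd n ∧ 3 ≤ G.chromaticNumber) → (G.subdivision n).chromaticNumber = 2) :=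
  chromatic_subdivision_general G n hn he
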